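/- arXiv:1807.08658 — 2 statements merged into one kernel-verified Lean document; each statement's English description precedes it below -/
import Mathlib

section
/- For arbitrary real sequences a = (a_1, a_2, ...) and e = (e_1, e_2, ...), and all m ≥ k ≥ 0, S^{a,e}(m,k) = ∑_{S} ∏_{i=1}^{m-k} (a_{s_i - i + 1} - e_{s_i}), where the sum is over all subsets S = {s_1, ..., s_{m-k}} of {1, ..., m} with s_1 < s_2 < ... < s_{m-k}. -/
open Polynomial Finset

/-- The numbers `S^{a,e}(m,k)` (0-indexed: `a i`, `e i` denote `a_{i+1}`, `e_{i+1}`),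
uniquely determined by `∏_{i=1}^m (x - e_i) = ∑_{k=0}^m S^{a,e}(m,k) ∏_{i=1}^k (x - a_i)`
together with `S^{a,e}(m,k) = 0` for `k > m`. -/
def SaeRel (a e : ℕ → ℝ) (S : ℕ → ℕ → ℝ) : Prop :=
  (∀ m k : ℕ, m < k → S m k = 0) ∧
  ∀ m : ℕ, ∏ i ∈ Finset.range m, (X - C (e i)) =
    ∑ k ∈ Finset.range (m + 1), C (S m k) * ∏ i ∈ Finset.range k, (X - C (a i))

/-- The cap-index function for restricted growth: `rgsF a e i` is the (0-indexed)
index of the cap for `e i`; the cap for `e 0` is `a 0`, and the cap index increments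
exactly when equality with the cap holds. -/
noncomputable def rgsF (a e : ℕ → ℝ) : ℕ → ℕ
  | 0 => 0
  | i + 1 => if e i = a (rgsF a e i) then rgsF a e i + 1 else rgsF a e i

/-- `e` is a restricted growth sequence relative to `a`. -/
def IsRGS (a e : ℕ → ℝ) : Prop := ∀ i : ℕ, e i ≤ a (rgsF a e i)

/-- An infinite matrix (rows and columns indexed by `ℕ`) is totally non-negative if
every minor is non-negative. -/
def TotallyNonneg (M : ℕ → ℕ → ℝ) : Prop :=
  ∀ (p : ℕ) (r c : Fin p → ℕ), StrictMono r → StrictMono c →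
    0 ≤ (Matrix.of fun i j => M (r i) (c j)).det

/-!
Write `N_k = ∏_{i ≤ k} (x - a_i)` for the Newton polynomials. Multiplying the identity for `m`
by `x - e_{m+1}` and using `(x - e_{m+1}) N_k = N_{k+1} + (a_{k+1} - e_{m+1}) N_k` gives, since
the `N_k` are linearly independent, the triangular recurrence
`S(m+1,k) = S(m,k-1) + (a_{k+1} - e_{m+1}) S(m,k)`. The sum over subsets obeys the same
recurrence: split it according to whether `m+1 ∈ S`; if so, `m+1` is the last element
`s_{m+1-k}` and contributes the factor `a_{k+1} - e_{m+1}`.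
-/

namespace Fin

variable {n m : ℕ}

lemma strictMono_snoc_last {s : Fin n → Fin m} (hs : StrictMono s) :
    StrictMono (snoc (castSucc ∘ s) (last m) : Fin (n + 1) → Fin (m + 1)) := by
  intro i j hij
  induction j using lastCases with
  | last =>
    obtain ⟨i, rfl⟩ := exists_castSucc_eq.2 hij.ne
    simp
  | cast j =>
    obtain ⟨i, rfl⟩ := exists_castSucc_eq.2 (hij.trans (castSucc_lt_last j)).ne
    simpa using hs (castSucc_lt_castSucc_iff.1 hij)

def strictMonoSnocLastEquiv (n m : ℕ) : {s : Fin n → Fin m // StrictMono s} ≃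
    {s : {s : Fin (n + 1) → Fin (m + 1) // StrictMono s} // s.1 (last n) = last m} where
  toFun s := ⟨⟨_, strictMono_snoc_last s.2⟩, by simp⟩
  invFun s := ⟨fun i => (s.1.1 i.castSucc).castPred
      ((s.1.2 (castSucc_lt_last i)).trans_eq s.2).ne, fun i j hij => by
    simpa [castPred_lt_castPred_iff] using s.1.2 (castSucc_lt_castSucc_iff.2 hij)⟩
  left_inv s := by ext i; simp
  right_inv s := by
    ext j : 3
    induction j using lastCases with
    | last => simpa using s.2.symm
    | cast j => simp

def strictMonoCastSuccEquiv (n m : ℕ) : {s : Fin (n + 1) → Fin m // StrictMono s} ≃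
    {s : {s : Fin (n + 1) → Fin (m + 1) // StrictMono s} // s.1 (last n) ≠ last m} where
  toFun s := ⟨⟨castSucc ∘ s, strictMono_castSucc.comp s.2⟩, castSucc_ne_last _⟩
  invFun s := ⟨fun i => (s.1.1 i).castPred
      ((s.1.2.monotone (le_last i)).trans_lt (lt_last_iff_ne_last.2 s.2)).ne,
    fun i j hij => by simpa [castPred_lt_castPred_iff] using s.1.2 hij⟩
  left_inv s := by ext i; simp
  right_inv s := by ext i : 3; simp

end Fin

noncomputable def incSeqSum (a e : ℕ → ℝ) (n m : ℕ) : ℝ :=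
  ∑ s : {s : Fin n → Fin m // StrictMono s}, ∏ i, (a (s.1 i - i) - e (s.1 i))

lemma incSeqSum_zero_left (a e : ℕ → ℝ) (m : ℕ) : incSeqSum a e 0 m = 1 := by
  rw [incSeqSum, Fintype.sum_subsingleton _ ⟨Fin.elim0, fun i => i.elim0⟩]
  simp

lemma incSeqSum_of_lt (a e : ℕ → ℝ) {n m : ℕ} (h : m < n) : incSeqSum a e n m = 0 := by
  have : IsEmpty {s : Fin n → Fin m // StrictMono s} :=
    ⟨fun s => h.not_ge (Fin.le_of_injective s.1 s.2.injective)⟩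
  simp [incSeqSum]

lemma incSeqSum_succ_succ (a e : ℕ → ℝ) (n m : ℕ) :
    incSeqSum a e (n + 1) (m + 1) =
      (a (m - n) - e m) * incSeqSum a e n m + incSeqSum a e (n + 1) m := by
  classical
  rw [incSeqSum, ← Fintype.sum_subtype_add_sum_subtype (fun s => s.1 (Fin.last n) = Fin.last m),
    ← (Fin.strictMonoSnocLastEquiv n m).sum_comp, ← (Fin.strictMonoCastSuccEquiv n m).sum_comp,
    incSeqSum, incSeqSum, mul_sum]
  congr 1
  refine sum_congr rfl fun s _ => ?_
  simp [Fin.strictMonoSnocLastEquiv, Fin.prod_univ_castSucc, mul_comm]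

section Newton

variable {R : Type*} [CommRing R]

lemma prod_range_X_sub_C_mul (a : ℕ → R) (k : ℕ) (c : R) :
    (∏ i ∈ range k, (X - C (a i))) * (X - C c) =
      ∏ i ∈ range (k + 1), (X - C (a i)) + C (a k - c) * ∏ i ∈ range k, (X - C (a i)) := by
  rw [prod_range_succ, map_sub]
  ring

variable [IsDomain R]

noncomputable def newtonSeq (a : ℕ → R) : Polynomial.Sequence R where
  elems' k := ∏ i ∈ range k, (X - C (a i))
  degree_eq' k := by simp [degree_prod]

lemma eq_of_sum_C_mul_prod_X_sub_C_eq (a : ℕ → R) (n : ℕ) (c d : ℕ → R)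
    (h : ∑ k ∈ range n, C (c k) * ∏ i ∈ range k, (X - C (a i)) =
      ∑ k ∈ range n, C (d k) * ∏ i ∈ range k, (X - C (a i))) :
    ∀ k < n, c k = d k := by
  intro k hk
  have := linearIndependent_iff'.1 (newtonSeq a).linearIndependent (range n) (c - d)
  simp only [Pi.sub_apply, sub_smul, sum_sub_distrib, smul_eq_C_mul] at this
  exact sub_eq_zero.1 (this (sub_eq_zero.2 h) k (mem_range.2 hk))

end Newton

namespace SaeRel

variable {a e : ℕ → ℝ} {S : ℕ → ℕ → ℝ}

lemma zero_zero (hS : SaeRel a e S) : S 0 0 = 1 :=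
  C_injective (by simpa using (hS.2 0).symm)

lemma succ_left (hS : SaeRel a e S) (m : ℕ) :
    ∀ k < m + 2, S (m + 1) k = (if k = 0 then 0 else S m (k - 1)) + (a k - e m) * S m k := by
  refine eq_of_sum_C_mul_prod_X_sub_C_eq a (m + 2) _ _ ?_
  rw [← hS.2, prod_range_succ, hS.2, sum_mul]
  simp only [mul_assoc, prod_range_X_sub_C_mul, mul_add, map_add, add_mul, sum_add_distrib]
  rw [sum_range_succ' _ (m + 1), sum_range_succ _ (m + 1), hS.1 m (m + 1) m.lt_succ_self]
  simp only [Nat.add_eq_zero_iff, one_ne_zero, and_false, ↓reduceIte, add_tsub_cancel_right,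
    map_zero, zero_mul, mul_zero, add_zero, map_mul, mul_assoc]
  exact congrArg _ (sum_congr rfl fun k _ => mul_left_comm _ _ _)

lemma eq_incSeqSum (hS : SaeRel a e S) : ∀ m k, k ≤ m → S m k = incSeqSum a e (m - k) m
  | 0, 0, _ => by rw [hS.zero_zero, incSeqSum_zero_left]
  | m + 1, 0, _ => by
    rw [hS.succ_left m 0 (by omega), if_pos rfl, zero_add, eq_incSeqSum hS m 0 m.zero_le,
      Nat.sub_zero, Nat.sub_zero, incSeqSum_succ_succ, Nat.sub_self,
      incSeqSum_of_lt a e m.lt_succ_self, add_zero]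
  | m + 1, k + 1, hk => by
    rw [hS.succ_left m (k + 1) (by omega), if_neg k.succ_ne_zero, k.add_sub_cancel,
      eq_incSeqSum hS m k (by omega)]
    obtain rfl | hkm := eq_or_lt_of_le (Nat.le_of_succ_le_succ hk)
    · simp [hS.1 k (k + 1) k.lt_succ_self, incSeqSum_zero_left]
    obtain ⟨n, rfl⟩ : ∃ n, m = n + (k + 1) := ⟨m - (k + 1), by omega⟩
    rw [eq_incSeqSum hS _ (k + 1) (by omega), show n + (k + 1) + 1 - (k + 1) = n + 1 by omega,
      incSeqSum_succ_succ, show n + (k + 1) - k = n + 1 by omega, Nat.add_sub_cancel,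
      Nat.add_sub_cancel_left]
    ring

end SaeRel

/-- The sequences `1 ≤ s_1 < ⋯ < s_{m-k} ≤ m` are encoded, 0-indexed, as strictly monotone maps
`Fin (m-k) → Fin m`, so that `a_{s_i-i+1}` becomes `a (s i - i)`. -/
theorem stmt8 (a e : ℕ → ℝ) (S : ℕ → ℕ → ℝ) (hS : SaeRel a e S)
    (m k : ℕ) (hkm : k ≤ m) :
    S m k = ∑ s : {s : Fin (m - k) → Fin m // ∀ i j, i < j → s i < s j},
      ∏ i : Fin (m - k), (a ((s.1 i : ℕ) - (i : ℕ)) - e (s.1 i : ℕ)) :=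
  hS.eq_incSeqSum m k hkm
end

section
/- For an arbitrary real sequence a = (a_1, a_2, ...) and all j ≥ k ≥ 0, S^{a,0}(j,k) = h_{j-k}(a_1, ..., a_{k+1}), where 0 denotes the all-zeros sequence and h_d denotes the complete homogeneous symmetric polynomial of degree d; that is, in the expansion x^j = ∑_{k=0}^j c_k ∏_{i=1}^k (x - a_i) the coefficient c_k equals h_{j-k}(a_1, ..., a_{k+1}). -/
/-!
Multiplication by `X` acts on the Newton basis `P k = ∏_{i<k} (X - a_i)` by
`X * P k = P (k + 1) + a_k * P k`. Hence the coefficients of `X ^ n` in this basis obey the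
Pascal-type recurrence `h_{d+1}(a_0..a_t) = h_{d+1}(a_0..a_{t-1}) + a_t * h_d(a_0..a_t)` of the
complete homogeneous symmetric polynomials, with the same boundary values, and they are
determined uniquely because `P k` is monic of degree `k`.
-/

open Polynomial Finset

/-- The complete homogeneous symmetric polynomial `h_d(a_0, …, a_{t-1})`, written as
the sum over weakly increasing functions `Fin d → Fin t` (i.e. over degree-`d`
monomials in `t` variables) of the corresponding products. -/
noncomputable def hsymm (a : ℕ → ℝ) (t d : ℕ) : ℝ :=
  ∑ f : {f : Fin d → Fin t // ∀ i j, i ≤ j → f i ≤ f j}, ∏ i : Fin d, a (f.1 i : ℕ)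

abbrev WeakMono (d t : ℕ) : Type := {f : Fin d → Fin t // ∀ i j, i ≤ j → f i ≤ f j}

lemma WeakMono.snoc_last_le {d t : ℕ} (f : WeakMono d (t + 1)) (i j : Fin (d + 1))
    (hij : i ≤ j) :
    Fin.snoc (α := fun _ => Fin (t + 1)) f.1 (Fin.last t) i ≤
      Fin.snoc (α := fun _ => Fin (t + 1)) f.1 (Fin.last t) j := by
  induction j using Fin.lastCases with
  | last => simpa using Fin.le_last _
  | cast j =>
    induction i using Fin.lastCases with
    | last => exact absurd hij (Fin.castSucc_lt_last j).not_ge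
    | cast i => simpa using f.2 i j (by simpa using hij)

lemma WeakMono.ne_last {d t : ℕ} (f : WeakMono (d + 1) (t + 1))
    (h : f.1 (Fin.last d) ≠ Fin.last t) (i : Fin (d + 1)) : f.1 i ≠ Fin.last t :=
  fun hi => h (le_antisymm (Fin.le_last _) (hi ▸ f.2 i _ (Fin.le_last i)))

/-- A weakly increasing map into `Fin (t + 1)` either never takes the value `last t`, or
takes it at the last point. -/
def weakMonoSuccEquiv (d t : ℕ) :
    WeakMono (d + 1) t ⊕ WeakMono d (t + 1) ≃ WeakMono (d + 1) (t + 1) where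
  toFun := Sum.elim
    (fun f => ⟨fun i => (f.1 i).castSucc, fun i j hij => by simpa using f.2 i j hij⟩)
    (fun g => ⟨Fin.snoc (α := fun _ => Fin (t + 1)) g.1 (Fin.last t), g.snoc_last_le⟩)
  invFun f :=
    if h : f.1 (Fin.last d) = Fin.last t then
      .inr ⟨fun i => f.1 i.castSucc, fun i j hij => f.2 _ _ (by simpa using hij)⟩
    else
      .inl ⟨fun i => (f.1 i).castPred (f.ne_last h i), fun i j hij => by
        simpa [Fin.castPred_le_castPred_iff] using f.2 i j hij⟩
  left_inv := by
    rintro (f | g)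
    · simp [(Fin.castSucc_lt_last _).ne]
    · simp
  right_inv f := by
    by_cases h : f.1 (Fin.last d) = Fin.last t
    · simp only [h, dite_true, Sum.elim_inr]
      ext i
      induction i using Fin.lastCases <;> simp [h]
    · simp [h]

lemma hsymm_zero_right (a : ℕ → ℝ) (t : ℕ) : hsymm a t 0 = 1 := by
  simp [hsymm]

lemma hsymm_zero_succ (a : ℕ → ℝ) (d : ℕ) : hsymm a 0 (d + 1) = 0 := by
  simp [hsymm]

lemma hsymm_succ_succ (a : ℕ → ℝ) (t d : ℕ) :
    hsymm a (t + 1) (d + 1) = hsymm a t (d + 1) + a t * hsymm a (t + 1) d := by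
  rw [hsymm, ← (weakMonoSuccEquiv d t).sum_comp, Fintype.sum_sum_type, hsymm, hsymm, mul_sum]
  congr 1
  refine Fintype.sum_congr _ _ fun g => ?_
  simp [weakMonoSuccEquiv, Fin.prod_univ_castSucc, mul_comm]

lemma Polynomial.eq_of_sum_C_mul_monic_eq {R : Type*} [Ring R] {P : ℕ → R[X]}
    (hmonic : ∀ k, (P k).Monic) (hdeg : ∀ k, (P k).natDegree = k) {c d : ℕ → R} {n : ℕ}
    (h : ∑ k ∈ range n, C (c k) * P k = ∑ k ∈ range n, C (d k) * P k) :
    ∀ k < n, c k = d k := by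
  induction n with
  | zero => simp
  | succ n ih =>
    have top_coeff (c : ℕ → R) : (∑ k ∈ range (n + 1), C (c k) * P k).coeff n = c n := by
      have hlead : (P n).coeff n = 1 := by simpa only [hdeg] using (hmonic n).coeff_natDegree
      rw [finsetSum_coeff, sum_range_succ, coeff_C_mul, hlead, mul_one, add_eq_right]
      refine sum_eq_zero fun k hk => ?_
      rw [coeff_C_mul, coeff_eq_zero_of_natDegree_lt (by simpa [hdeg] using hk), mul_zero]
    have hn : c n = d n := by rw [← top_coeff c, ← top_coeff d, h]
    rw [sum_range_succ, sum_range_succ, hn, add_left_inj] at h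
    intro k hk
    rcases (Nat.lt_succ_iff.mp hk).lt_or_eq with hk | rfl
    exacts [ih h k hk, hn]

lemma X_pow_eq_sum_antidiagonal (a : ℕ → ℝ) (n : ℕ) :
    (X : ℝ[X]) ^ n =
      ∑ p ∈ antidiagonal n, C (hsymm a (p.1 + 1) p.2) * ∏ i ∈ range p.1, (X - C (a i)) := by
  let P : ℕ → ℝ[X] := fun k => ∏ i ∈ range k, (X - C (a i))
  induction n with
  | zero => simp [hsymm_zero_right]
  | succ n ih =>
    have X_mul (k : ℕ) : X * P k = P (k + 1) + C (a k) * P k := by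
      simp only [P, prod_range_succ]; ring
    -- split a boundary term off `antidiagonal (n + 1)` in the two possible ways
    have shift : ∑ p ∈ antidiagonal n, C (hsymm a (p.1 + 1) p.2) * P (p.1 + 1) =
        P (n + 1) + ∑ p ∈ antidiagonal n, C (hsymm a p.1 (p.2 + 1)) * P p.1 := by
      have h₁ := Nat.sum_antidiagonal_succ (f := fun p => C (hsymm a p.1 p.2) * P p.1) (n := n)
      rw [Nat.sum_antidiagonal_succ'] at h₁
      simpa [hsymm_zero_right, hsymm_zero_succ] using h₁.symm
    calc (X : ℝ[X]) ^ (n + 1) = X * X ^ n := pow_succ' X n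
      _ = ∑ p ∈ antidiagonal n,
            C (hsymm a (p.1 + 1) p.2) * (P (p.1 + 1) + C (a p.1) * P p.1) := by
        rw [ih, mul_sum]
        exact sum_congr rfl fun p _ => by rw [← X_mul]; ring
      _ = P (n + 1) + ∑ p ∈ antidiagonal n, C (hsymm a (p.1 + 1) (p.2 + 1)) * P p.1 := by
        simp only [mul_add]
        rw [sum_add_distrib, shift, add_assoc, ← sum_add_distrib]
        refine congrArg _ (sum_congr rfl fun p _ => ?_)
        rw [hsymm_succ_succ, C_add, C_mul]
        ring
      _ = _ := by
        rw [Nat.sum_antidiagonal_succ', hsymm_zero_right, C_1, one_mul]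

/-- `S^{a,0}(j,k) = h_{j-k}(a_1, …, a_{k+1})`. -/
theorem stmt15 (a : ℕ → ℝ) (Sa0 : ℕ → ℕ → ℝ)
    (h : SaeRel a (fun _ => 0) Sa0) (j k : ℕ) (hkj : k ≤ j) :
    Sa0 j k = hsymm a (k + 1) (j - k) := by
  have expand_S : (X : ℝ[X]) ^ j =
      ∑ k ∈ range (j + 1), C (Sa0 j k) * ∏ i ∈ range k, (X - C (a i)) := by
    simpa using h.2 j
  have expand_hsymm := X_pow_eq_sum_antidiagonal a j
  rw [Nat.sum_antidiagonal_eq_sum_range_succ_mk] at expand_hsymm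
  exact eq_of_sum_C_mul_monic_eq (fun k => monic_prod_X_sub_C a (range k)) (by simp)
    (expand_S.symm.trans expand_hsymm) k (Nat.lt_succ_of_le hkj)
end
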